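/- arXiv:2201.07009 — 6 statements merged into one kernel-verified Lean document; each statement's English description precedes it below -/
import Mathlib

section
/- Every MV-term in the signature {·, →, ∧, ∨, 0, 1} is equivalent in the variety of MV-algebras either to a positive term (a term in the 0-free signature {·, →, ∧, ∨, 1}) or to a negative term (the negation ¬t = t → 0 of a positive term t). -/
/-- MV-terms in the signature {·, →, ∧, ∨, 0, 1} with variables indexed by ℕ. -/
inductive MVTerm where
  | var : ℕ → MVTerm
  | zero : MVTerm
  | one : MVTerm
  | mul : MVTerm → MVTerm → MVTerm
  | imp : MVTerm → MVTerm → MVTerm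
  | inf : MVTerm → MVTerm → MVTerm
  | sup : MVTerm → MVTerm → MVTerm

/-- A term is positive if it contains no occurrence of the constant 0. -/
def Positive : MVTerm → Prop
  | .var _ => True
  | .zero => False
  | .one => True
  | .mul a b => Positive a ∧ Positive b
  | .imp a b => Positive a ∧ Positive b
  | .inf a b => Positive a ∧ Positive b
  | .sup a b => Positive a ∧ Positive b

/-- Łukasiewicz product on [0,1]. -/
noncomputable def lmul (x y : ℝ) : ℝ := max 0 (x + y - 1)

/-- Łukasiewicz residuum on [0,1]. -/
noncomputable def limp (x y : ℝ) : ℝ := min 1 (1 - x + y)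

/-- Evaluation of an MV-term in the standard MV-algebra on [0,1]. -/
noncomputable def evalM (v : ℕ → ℝ) : MVTerm → ℝ
  | .var i => v i
  | .zero => 0
  | .one => 1
  | .mul a b => lmul (evalM v a) (evalM v b)
  | .imp a b => limp (evalM v a) (evalM v b)
  | .inf a b => min (evalM v a) (evalM v b)
  | .sup a b => max (evalM v a) (evalM v b)

/-- Two MV-terms are equivalent in the variety of MV-algebras iff they have the same
    term function on the standard (generic) MV-algebra [0,1]. -/
def MVEquiv (t u : MVTerm) : Prop :=
  ∀ v : ℕ → ℝ, (∀ i, v i ∈ Set.Icc (0:ℝ) 1) → evalM v t = evalM v u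

section Aux

lemma evalM_mem (v : ℕ → ℝ) (hv : ∀ i, v i ∈ Set.Icc (0:ℝ) 1) (t : MVTerm) :
    evalM v t ∈ Set.Icc (0:ℝ) 1 := by
  induction t with
  | var i => exact hv i
  | zero => exact ⟨le_refl _, zero_le_one⟩
  | one => exact ⟨zero_le_one, le_refl _⟩
  | mul a b ha hb =>
    obtain ⟨ha0, ha1⟩ := ha; obtain ⟨hb0, hb1⟩ := hb
    simp only [evalM, lmul, Set.mem_Icc]
    constructor
    · exact le_max_left _ _
    · apply max_le <;> linarith
  | imp a b ha hb =>
    obtain ⟨ha0, ha1⟩ := ha; obtain ⟨hb0, hb1⟩ := hb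
    simp only [evalM, limp, Set.mem_Icc]
    constructor
    · apply le_min <;> linarith
    · exact min_le_left _ _
  | inf a b ha hb =>
    obtain ⟨ha0, ha1⟩ := ha; obtain ⟨hb0, hb1⟩ := hb
    exact ⟨le_min ha0 hb0, min_le_of_left_le ha1⟩
  | sup a b ha hb =>
    obtain ⟨ha0, ha1⟩ := ha; obtain ⟨hb0, hb1⟩ := hb
    exact ⟨le_max_of_le_left ha0, max_le ha1 hb1⟩

variable {x y : ℝ}

lemma L1 (hx : x ∈ Set.Icc (0:ℝ) 1) (hy : y ∈ Set.Icc (0:ℝ) 1) :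
    lmul x (limp y 0) = limp (limp x y) 0 := by
  obtain ⟨hx0, hx1⟩ := hx; obtain ⟨hy0, hy1⟩ := hy
  simp only [lmul, limp, max_def, min_def]
  split_ifs <;> linarith

lemma L2 (hx : x ∈ Set.Icc (0:ℝ) 1) (hy : y ∈ Set.Icc (0:ℝ) 1) :
    lmul (limp x 0) (limp y 0) = limp (limp (limp x (lmul x y)) y) 0 := by
  obtain ⟨hx0, hx1⟩ := hx; obtain ⟨hy0, hy1⟩ := hy
  simp only [lmul, limp, max_def, min_def]
  split_ifs <;> linarith

lemma L3 (hx : x ∈ Set.Icc (0:ℝ) 1) (hy : y ∈ Set.Icc (0:ℝ) 1) :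
    limp x (limp y 0) = limp (lmul x y) 0 := by
  obtain ⟨hx0, hx1⟩ := hx; obtain ⟨hy0, hy1⟩ := hy
  simp only [lmul, limp, max_def, min_def]
  split_ifs <;> linarith

lemma L4 (hx : x ∈ Set.Icc (0:ℝ) 1) (hy : y ∈ Set.Icc (0:ℝ) 1) :
    limp (limp x 0) y = limp (limp x (lmul x y)) y := by
  obtain ⟨hx0, hx1⟩ := hx; obtain ⟨hy0, hy1⟩ := hy
  simp only [lmul, limp, max_def, min_def]
  split_ifs <;> linarith

lemma L5 (hx : x ∈ Set.Icc (0:ℝ) 1) (hy : y ∈ Set.Icc (0:ℝ) 1) :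
    limp (limp x 0) (limp y 0) = limp y x := by
  obtain ⟨hx0, hx1⟩ := hx; obtain ⟨hy0, hy1⟩ := hy
  simp only [lmul, limp, max_def, min_def]
  split_ifs <;> linarith

lemma L6 (hx : x ∈ Set.Icc (0:ℝ) 1) (hy : y ∈ Set.Icc (0:ℝ) 1) :
    min x (limp y 0) = limp (limp (limp (limp x (lmul x y)) y) y) 0 := by
  obtain ⟨hx0, hx1⟩ := hx; obtain ⟨hy0, hy1⟩ := hy
  simp only [lmul, limp, max_def, min_def]
  split_ifs <;> linarith

lemma L7 (hx : x ∈ Set.Icc (0:ℝ) 1) (hy : y ∈ Set.Icc (0:ℝ) 1) :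
    min (limp x 0) (limp y 0) = limp (max x y) 0 := by
  obtain ⟨hx0, hx1⟩ := hx; obtain ⟨hy0, hy1⟩ := hy
  simp only [lmul, limp, max_def, min_def]
  split_ifs <;> linarith

lemma L8 (hx : x ∈ Set.Icc (0:ℝ) 1) (hy : y ∈ Set.Icc (0:ℝ) 1) :
    max x (limp y 0) = limp (limp (limp y (lmul y x)) x) x := by
  obtain ⟨hx0, hx1⟩ := hx; obtain ⟨hy0, hy1⟩ := hy
  simp only [lmul, limp, max_def, min_def]
  split_ifs <;> linarith

lemma L9 (hx : x ∈ Set.Icc (0:ℝ) 1) (hy : y ∈ Set.Icc (0:ℝ) 1) :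
    max (limp x 0) (limp y 0) = limp (min x y) 0 := by
  obtain ⟨hx0, hx1⟩ := hx; obtain ⟨hy0, hy1⟩ := hy
  simp only [lmul, limp, max_def, min_def]
  split_ifs <;> linarith

end Aux
lemma lmul_comm' (x y : ℝ) : lmul x y = lmul y x := by
  simp [lmul]; ring_nf

/-- Every MV-term is equivalent in the variety of MV-algebras either to a positive term
    or to a negative term (the negation of a positive term). -/
theorem mvterm_pos_or_neg (t : MVTerm) :
    (∃ p : MVTerm, Positive p ∧ MVEquiv t p) ∨
    (∃ p : MVTerm, Positive p ∧ MVEquiv t (MVTerm.imp p MVTerm.zero)) := by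
  induction t with
  | var i => exact Or.inl ⟨.var i, trivial, fun v hv => rfl⟩
  | one => exact Or.inl ⟨.one, trivial, fun v hv => rfl⟩
  | zero =>
    refine Or.inr ⟨.one, trivial, fun v hv => ?_⟩
    simp [evalM, limp]
  | mul a b iha ihb =>
    rcases iha with ⟨pa, hpa, ea⟩ | ⟨pa, hpa, ea⟩ <;>
      rcases ihb with ⟨pb, hpb, eb⟩ | ⟨pb, hpb, eb⟩
    · exact Or.inl ⟨pa.mul pb, ⟨hpa, hpb⟩, fun v hv => by
        simp only [evalM]; rw [ea v hv, eb v hv]⟩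
    · refine Or.inr ⟨pa.imp pb, ⟨hpa, hpb⟩, fun v hv => ?_⟩
      have Ha := evalM_mem v hv pa; have Hb := evalM_mem v hv pb
      simp only [evalM]; rw [ea v hv, eb v hv]; simp only [evalM]
      exact L1 Ha Hb
    · refine Or.inr ⟨pb.imp pa, ⟨hpb, hpa⟩, fun v hv => ?_⟩
      have Ha := evalM_mem v hv pa; have Hb := evalM_mem v hv pb
      simp only [evalM]; rw [ea v hv, eb v hv]; simp only [evalM]
      rw [lmul_comm']
      exact L1 Hb Ha
    · refine Or.inr ⟨(pa.imp (pa.mul pb)).imp pb, ⟨⟨hpa, hpa, hpb⟩, hpb⟩, fun v hv => ?_⟩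
      have Ha := evalM_mem v hv pa; have Hb := evalM_mem v hv pb
      simp only [evalM]; rw [ea v hv, eb v hv]; simp only [evalM]
      exact L2 Ha Hb
  | imp a b iha ihb =>
    rcases iha with ⟨pa, hpa, ea⟩ | ⟨pa, hpa, ea⟩ <;>
      rcases ihb with ⟨pb, hpb, eb⟩ | ⟨pb, hpb, eb⟩
    · exact Or.inl ⟨pa.imp pb, ⟨hpa, hpb⟩, fun v hv => by
        simp only [evalM]; rw [ea v hv, eb v hv]⟩
    · refine Or.inr ⟨pa.mul pb, ⟨hpa, hpb⟩, fun v hv => ?_⟩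
      have Ha := evalM_mem v hv pa; have Hb := evalM_mem v hv pb
      simp only [evalM]; rw [ea v hv, eb v hv]; simp only [evalM]
      exact L3 Ha Hb
    · refine Or.inl ⟨(pa.imp (pa.mul pb)).imp pb, ⟨⟨hpa, hpa, hpb⟩, hpb⟩, fun v hv => ?_⟩
      have Ha := evalM_mem v hv pa; have Hb := evalM_mem v hv pb
      simp only [evalM]; rw [ea v hv, eb v hv]; simp only [evalM]
      exact L4 Ha Hb
    · refine Or.inl ⟨pb.imp pa, ⟨hpb, hpa⟩, fun v hv => ?_⟩
      have Ha := evalM_mem v hv pa; have Hb := evalM_mem v hv pb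
      simp only [evalM]; rw [ea v hv, eb v hv]; simp only [evalM]
      exact L5 Ha Hb
  | inf a b iha ihb =>
    rcases iha with ⟨pa, hpa, ea⟩ | ⟨pa, hpa, ea⟩ <;>
      rcases ihb with ⟨pb, hpb, eb⟩ | ⟨pb, hpb, eb⟩
    · exact Or.inl ⟨pa.inf pb, ⟨hpa, hpb⟩, fun v hv => by
        simp only [evalM]; rw [ea v hv, eb v hv]⟩
    · refine Or.inr ⟨((pa.imp (pa.mul pb)).imp pb).imp pb,
        ⟨⟨⟨hpa, hpa, hpb⟩, hpb⟩, hpb⟩, fun v hv => ?_⟩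
      have Ha := evalM_mem v hv pa; have Hb := evalM_mem v hv pb
      simp only [evalM]; rw [ea v hv, eb v hv]; simp only [evalM]
      exact L6 Ha Hb
    · refine Or.inr ⟨((pb.imp (pb.mul pa)).imp pa).imp pa,
        ⟨⟨⟨hpb, hpb, hpa⟩, hpa⟩, hpa⟩, fun v hv => ?_⟩
      have Ha := evalM_mem v hv pa; have Hb := evalM_mem v hv pb
      simp only [evalM]; rw [ea v hv, eb v hv]; simp only [evalM]
      rw [min_comm]
      exact L6 Hb Ha
    · refine Or.inr ⟨pa.sup pb, ⟨hpa, hpb⟩, fun v hv => ?_⟩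
      have Ha := evalM_mem v hv pa; have Hb := evalM_mem v hv pb
      simp only [evalM]; rw [ea v hv, eb v hv]; simp only [evalM]
      exact L7 Ha Hb
  | sup a b iha ihb =>
    rcases iha with ⟨pa, hpa, ea⟩ | ⟨pa, hpa, ea⟩ <;>
      rcases ihb with ⟨pb, hpb, eb⟩ | ⟨pb, hpb, eb⟩
    · exact Or.inl ⟨pa.sup pb, ⟨hpa, hpb⟩, fun v hv => by
        simp only [evalM]; rw [ea v hv, eb v hv]⟩
    · refine Or.inl ⟨((pb.imp (pb.mul pa)).imp pa).imp pa,
        ⟨⟨⟨hpb, hpb, hpa⟩, hpa⟩, hpa⟩, fun v hv => ?_⟩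
      have Ha := evalM_mem v hv pa; have Hb := evalM_mem v hv pb
      simp only [evalM]; rw [ea v hv, eb v hv]; simp only [evalM]
      exact L8 Ha Hb
    · refine Or.inl ⟨((pa.imp (pa.mul pb)).imp pb).imp pb,
        ⟨⟨⟨hpa, hpa, hpb⟩, hpb⟩, hpb⟩, fun v hv => ?_⟩
      have Ha := evalM_mem v hv pa; have Hb := evalM_mem v hv pb
      simp only [evalM]; rw [ea v hv, eb v hv]; simp only [evalM]
      rw [max_comm]
      exact L8 Hb Ha
    · refine Or.inr ⟨pa.inf pb, ⟨hpa, hpb⟩, fun v hv => ?_⟩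
      have Ha := evalM_mem v hv pa; have Hb := evalM_mem v hv pb
      simp only [evalM]; rw [ea v hv, eb v hv]; simp only [evalM]
      exact L9 Ha Hb
end

section
/- A McNaughton function f in the free n-generated MV-algebra (realized as functions [0,1]^n → [0,1]) is the value of a positive term under the projection-generators if and only if f(1,…,1) = 1. -/
/-! ### Auxiliary real-arithmetic lemmas -/

lemma limp_zero' {x : ℝ} (hx : 0 ≤ x) : limp x 0 = 1 - x := by
  simp only [limp, min_def]; split_ifs <;> linarith

lemma lemB {x y : ℝ} (hx : x ∈ Set.Icc (0:ℝ) 1) (hy : y ∈ Set.Icc (0:ℝ) 1) :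
    limp x (lmul x y) = max (1-x) y := by
  obtain ⟨hx0, hx1⟩ := hx; obtain ⟨hy0, hy1⟩ := hy
  simp only [limp, lmul, min_def, max_def]; split_ifs <;> linarith

lemma lemA {x y : ℝ} (hx : x ∈ Set.Icc (0:ℝ) 1) (hy : y ∈ Set.Icc (0:ℝ) 1) :
    limp (limp x (lmul x y)) y = min 1 (x+y) := by
  obtain ⟨hx0, hx1⟩ := hx; obtain ⟨hy0, hy1⟩ := hy
  simp only [limp, lmul, min_def, max_def]; split_ifs <;> linarith

lemma lemC {x y : ℝ} (hx : x ∈ Set.Icc (0:ℝ) 1) (hy : y ∈ Set.Icc (0:ℝ) 1) :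
    lmul x (1-y) = 1 - limp x y := by
  obtain ⟨hx0, hx1⟩ := hx; obtain ⟨hy0, hy1⟩ := hy
  simp only [limp, lmul, min_def, max_def]; split_ifs <;> linarith

lemma lemD {x y : ℝ} (hx : x ∈ Set.Icc (0:ℝ) 1) (hy : y ∈ Set.Icc (0:ℝ) 1) :
    limp x (1-y) = 1 - lmul x y := by
  obtain ⟨hx0, hx1⟩ := hx; obtain ⟨hy0, hy1⟩ := hy
  simp only [limp, lmul, min_def, max_def]; split_ifs <;> linarith

lemma lemE {x y : ℝ} (hx : x ∈ Set.Icc (0:ℝ) 1) (hy : y ∈ Set.Icc (0:ℝ) 1) :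
    limp (1-x) (1-y) = limp y x := by
  obtain ⟨hx0, hx1⟩ := hx; obtain ⟨hy0, hy1⟩ := hy
  simp only [limp, min_def]; split_ifs <;> linarith

lemma lemMul {x y : ℝ} (hx : x ∈ Set.Icc (0:ℝ) 1) (hy : y ∈ Set.Icc (0:ℝ) 1) :
    lmul (1-x) (1-y) = 1 - min 1 (x+y) := by
  obtain ⟨hx0, hx1⟩ := hx; obtain ⟨hy0, hy1⟩ := hy
  simp only [lmul, min_def, max_def]; split_ifs <;> linarith

lemma lemF {x y : ℝ} (hx : x ∈ Set.Icc (0:ℝ) 1) (hy : y ∈ Set.Icc (0:ℝ) 1) :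
    limp (1-x) y = min 1 (x+y) := by
  obtain ⟨hx0, hx1⟩ := hx; obtain ⟨hy0, hy1⟩ := hy
  simp only [limp, min_def]; split_ifs <;> linarith

lemma lemG {x y : ℝ} (hx : x ∈ Set.Icc (0:ℝ) 1) (hy : y ∈ Set.Icc (0:ℝ) 1) :
    min x (1-y) = 1 - max (1-x) y := by
  obtain ⟨hx0, hx1⟩ := hx; obtain ⟨hy0, hy1⟩ := hy
  simp only [min_def, max_def]; split_ifs <;> linarith

lemma lemH {x y : ℝ} : min (1-x) (1-y) = 1 - max x y := by
  simp only [min_def, max_def]; split_ifs <;> linarith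

lemma lemI {x y : ℝ} : max (1-x) (1-y) = 1 - min x y := by
  simp only [min_def, max_def]; split_ifs <;> linarith

/-- Positive terms evaluate to `1` at the all-ones point. -/
lemma positive_eval_one {p : MVTerm} (hp : Positive p) :
    evalM (fun _ => (1:ℝ)) p = 1 := by
  induction p with
  | var i => simp [evalM]
  | zero => exact absurd hp (by simp [Positive])
  | one => simp [evalM]
  | mul a b ha hb => obtain ⟨h1, h2⟩ := hp; simp [evalM, ha h1, hb h2, lmul]
  | imp a b ha hb => obtain ⟨h1, h2⟩ := hp; simp [evalM, ha h1, hb h2, limp]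
  | inf a b ha hb => obtain ⟨h1, h2⟩ := hp; simp [evalM, ha h1, hb h2]
  | sup a b ha hb => obtain ⟨h1, h2⟩ := hp; simp [evalM, ha h1, hb h2]

/-! ### Positive combinators -/

/-- Strong disjunction `p ⊕ q` as a positive term: `(p → p·q) → q`. -/
def oplus (p q : MVTerm) : MVTerm := .imp (.imp p (.mul p q)) q

lemma oplus_pos {p q : MVTerm} (hp : Positive p) (hq : Positive q) :
    Positive (oplus p q) := ⟨⟨hp, hp, hq⟩, hq⟩

/-- `¬p ∨ q` as a positive term: `p → p·q`. -/
def negsup (p q : MVTerm) : MVTerm := .imp p (.mul p q)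

lemma negsup_pos {p q : MVTerm} (hp : Positive p) (hq : Positive q) :
    Positive (negsup p q) := ⟨hp, hp, hq⟩

/-- Negation of a term. -/
def mneg (p : MVTerm) : MVTerm := .imp p .zero

lemma mneg_eval (v : ℕ → ℝ) (hv : ∀ i, v i ∈ Set.Icc (0:ℝ) 1) (p : MVTerm) :
    evalM v (mneg p) = 1 - evalM v p := by
  have : evalM v (mneg p) = limp (evalM v p) 0 := rfl
  rw [this, limp_zero' (evalM_mem v hv p).1]

lemma oplus_eval (v : ℕ → ℝ) (hv : ∀ i, v i ∈ Set.Icc (0:ℝ) 1) (p q : MVTerm) :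
    evalM v (oplus p q) = min 1 (evalM v p + evalM v q) := by
  have : evalM v (oplus p q)
      = limp (limp (evalM v p) (lmul (evalM v p) (evalM v q))) (evalM v q) := rfl
  rw [this, lemA (evalM_mem v hv p) (evalM_mem v hv q)]

lemma negsup_eval (v : ℕ → ℝ) (hv : ∀ i, v i ∈ Set.Icc (0:ℝ) 1) (p q : MVTerm) :
    evalM v (negsup p q) = max (1 - evalM v p) (evalM v q) := by
  have : evalM v (negsup p q) = limp (evalM v p) (lmul (evalM v p) (evalM v q)) := rfl
  rw [this, lemB (evalM_mem v hv p) (evalM_mem v hv q)]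

/-- Dichotomy: every MV-term is equivalent either to a positive term or to the
    negation of a positive term. -/
lemma dichotomy (t : MVTerm) :
    (∃ p : MVTerm, Positive p ∧ MVEquiv t p) ∨
    (∃ p : MVTerm, Positive p ∧ MVEquiv t (mneg p)) := by
  induction t with
  | var i => exact Or.inl ⟨.var i, trivial, fun v hv => rfl⟩
  | zero =>
    refine Or.inr ⟨.one, trivial, fun v hv => ?_⟩
    rw [mneg_eval v hv]; simp [evalM]
  | one => exact Or.inl ⟨.one, trivial, fun v hv => rfl⟩
  | mul a b ha hb =>
    rcases ha with ⟨p, hp, hap⟩ | ⟨p, hp, hap⟩ <;>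
      rcases hb with ⟨q, hq, hbq⟩ | ⟨q, hq, hbq⟩
    · refine Or.inl ⟨.mul p q, ⟨hp, hq⟩, fun v hv => ?_⟩
      show lmul (evalM v a) (evalM v b) = lmul (evalM v p) (evalM v q)
      rw [hap v hv, hbq v hv]
    · -- p · ¬q  ≡  ¬(p → q)
      refine Or.inr ⟨.imp p q, ⟨hp, hq⟩, fun v hv => ?_⟩
      have Ha := hap v hv
      have Hb := hbq v hv; rw [mneg_eval v hv] at Hb
      show lmul (evalM v a) (evalM v b) = evalM v (mneg (.imp p q))
      rw [mneg_eval v hv, Ha, Hb]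
      show lmul (evalM v p) (1 - evalM v q) = 1 - limp (evalM v p) (evalM v q)
      exact lemC (evalM_mem v hv p) (evalM_mem v hv q)
    · -- ¬p · q  ≡  ¬(q → p)
      refine Or.inr ⟨.imp q p, ⟨hq, hp⟩, fun v hv => ?_⟩
      have Ha := hap v hv; rw [mneg_eval v hv] at Ha
      have Hb := hbq v hv
      show lmul (evalM v a) (evalM v b) = evalM v (mneg (.imp q p))
      rw [mneg_eval v hv, Ha, Hb, lmul_comm']
      show lmul (evalM v q) (1 - evalM v p) = 1 - limp (evalM v q) (evalM v p)
      exact lemC (evalM_mem v hv q) (evalM_mem v hv p)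
    · -- ¬p · ¬q  ≡  ¬(p ⊕ q)
      refine Or.inr ⟨oplus p q, oplus_pos hp hq, fun v hv => ?_⟩
      have Ha := hap v hv; rw [mneg_eval v hv] at Ha
      have Hb := hbq v hv; rw [mneg_eval v hv] at Hb
      show lmul (evalM v a) (evalM v b) = evalM v (mneg (oplus p q))
      rw [mneg_eval v hv, oplus_eval v hv, Ha, Hb]
      exact lemMul (evalM_mem v hv p) (evalM_mem v hv q)
  | imp a b ha hb =>
    rcases ha with ⟨p, hp, hap⟩ | ⟨p, hp, hap⟩ <;>
      rcases hb with ⟨q, hq, hbq⟩ | ⟨q, hq, hbq⟩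
    · refine Or.inl ⟨.imp p q, ⟨hp, hq⟩, fun v hv => ?_⟩
      show limp (evalM v a) (evalM v b) = limp (evalM v p) (evalM v q)
      rw [hap v hv, hbq v hv]
    · -- p → ¬q  ≡  ¬(p · q)
      refine Or.inr ⟨.mul p q, ⟨hp, hq⟩, fun v hv => ?_⟩
      have Ha := hap v hv
      have Hb := hbq v hv; rw [mneg_eval v hv] at Hb
      show limp (evalM v a) (evalM v b) = evalM v (mneg (.mul p q))
      rw [mneg_eval v hv, Ha, Hb]
      show limp (evalM v p) (1 - evalM v q) = 1 - lmul (evalM v p) (evalM v q)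
      exact lemD (evalM_mem v hv p) (evalM_mem v hv q)
    · -- ¬p → q  ≡  p ⊕ q
      refine Or.inl ⟨oplus p q, oplus_pos hp hq, fun v hv => ?_⟩
      have Ha := hap v hv; rw [mneg_eval v hv] at Ha
      have Hb := hbq v hv
      show limp (evalM v a) (evalM v b) = evalM v (oplus p q)
      rw [oplus_eval v hv, Ha, Hb]
      exact lemF (evalM_mem v hv p) (evalM_mem v hv q)
    · -- ¬p → ¬q  ≡  q → p
      refine Or.inl ⟨.imp q p, ⟨hq, hp⟩, fun v hv => ?_⟩
      have Ha := hap v hv; rw [mneg_eval v hv] at Ha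
      have Hb := hbq v hv; rw [mneg_eval v hv] at Hb
      show limp (evalM v a) (evalM v b) = limp (evalM v q) (evalM v p)
      rw [Ha, Hb]
      exact lemE (evalM_mem v hv p) (evalM_mem v hv q)
  | inf a b ha hb =>
    rcases ha with ⟨p, hp, hap⟩ | ⟨p, hp, hap⟩ <;>
      rcases hb with ⟨q, hq, hbq⟩ | ⟨q, hq, hbq⟩
    · refine Or.inl ⟨.inf p q, ⟨hp, hq⟩, fun v hv => ?_⟩
      show min (evalM v a) (evalM v b) = min (evalM v p) (evalM v q)
      rw [hap v hv, hbq v hv]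
    · -- p ∧ ¬q  ≡  ¬(¬p ∨ q)
      refine Or.inr ⟨negsup p q, negsup_pos hp hq, fun v hv => ?_⟩
      have Ha := hap v hv
      have Hb := hbq v hv; rw [mneg_eval v hv] at Hb
      show min (evalM v a) (evalM v b) = evalM v (mneg (negsup p q))
      rw [mneg_eval v hv, negsup_eval v hv, Ha, Hb]
      exact lemG (evalM_mem v hv p) (evalM_mem v hv q)
    · -- ¬p ∧ q  ≡  ¬(¬q ∨ p)
      refine Or.inr ⟨negsup q p, negsup_pos hq hp, fun v hv => ?_⟩
      have Ha := hap v hv; rw [mneg_eval v hv] at Ha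
      have Hb := hbq v hv
      show min (evalM v a) (evalM v b) = evalM v (mneg (negsup q p))
      rw [mneg_eval v hv, negsup_eval v hv, Ha, Hb, min_comm]
      exact lemG (evalM_mem v hv q) (evalM_mem v hv p)
    · -- ¬p ∧ ¬q  ≡  ¬(p ∨ q)
      refine Or.inr ⟨.sup p q, ⟨hp, hq⟩, fun v hv => ?_⟩
      have Ha := hap v hv; rw [mneg_eval v hv] at Ha
      have Hb := hbq v hv; rw [mneg_eval v hv] at Hb
      show min (evalM v a) (evalM v b) = evalM v (mneg (.sup p q))
      rw [mneg_eval v hv, Ha, Hb]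
      show min (1 - evalM v p) (1 - evalM v q) = 1 - max (evalM v p) (evalM v q)
      exact lemH
  | sup a b ha hb =>
    rcases ha with ⟨p, hp, hap⟩ | ⟨p, hp, hap⟩ <;>
      rcases hb with ⟨q, hq, hbq⟩ | ⟨q, hq, hbq⟩
    · refine Or.inl ⟨.sup p q, ⟨hp, hq⟩, fun v hv => ?_⟩
      show max (evalM v a) (evalM v b) = max (evalM v p) (evalM v q)
      rw [hap v hv, hbq v hv]
    · -- p ∨ ¬q  ≡  ¬q ∨ p
      refine Or.inl ⟨negsup q p, negsup_pos hq hp, fun v hv => ?_⟩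
      have Ha := hap v hv
      have Hb := hbq v hv; rw [mneg_eval v hv] at Hb
      show max (evalM v a) (evalM v b) = evalM v (negsup q p)
      rw [negsup_eval v hv, Ha, Hb, max_comm]
    · -- ¬p ∨ q
      refine Or.inl ⟨negsup p q, negsup_pos hp hq, fun v hv => ?_⟩
      have Ha := hap v hv; rw [mneg_eval v hv] at Ha
      have Hb := hbq v hv
      show max (evalM v a) (evalM v b) = evalM v (negsup p q)
      rw [negsup_eval v hv, Ha, Hb]
    · -- ¬p ∨ ¬q  ≡  ¬(p ∧ q)
      refine Or.inr ⟨.inf p q, ⟨hp, hq⟩, fun v hv => ?_⟩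
      have Ha := hap v hv; rw [mneg_eval v hv] at Ha
      have Hb := hbq v hv; rw [mneg_eval v hv] at Hb
      show max (evalM v a) (evalM v b) = evalM v (mneg (.inf p q))
      rw [mneg_eval v hv, Ha, Hb]
      show max (1 - evalM v p) (1 - evalM v q) = 1 - min (evalM v p) (evalM v q)
      exact lemI

/-- A McNaughton function in the free n-generated MV-algebra (realized as the term
    function of an MV-term under the projection-generators) is the value of a positive
    term iff it takes value 1 at the point (1,…,1). -/
theorem positive_iff_one_at_one (t : MVTerm) :
    (∃ p : MVTerm, Positive p ∧ MVEquiv t p) ↔ evalM (fun _ => (1:ℝ)) t = 1 := by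
  have hv : ∀ i : ℕ, (fun _ : ℕ => (1:ℝ)) i ∈ Set.Icc (0:ℝ) 1 :=
    fun _ => ⟨zero_le_one, le_refl 1⟩
  constructor
  · rintro ⟨p, hp, he⟩
    rw [he _ hv, positive_eval_one hp]
  · intro h1
    rcases dichotomy t with h | ⟨p, hp, he⟩
    · exact h
    · exfalso
      rw [he _ hv, mneg_eval _ hv, positive_eval_one hp] at h1
      norm_num at h1
end

section
/- Let V be a variety of FL_e-algebras (commutative residuated lattices with an extra constant 0). The class of 0-free subreducts of members of V is closed under homomorphic images, subalgebras, and direct products, hence is a variety of commutative residuated lattices. -/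
set_option linter.unusedVariables false

universe u

/-- A commutative residuated lattice. -/
structure CRL (A : Type u) where
  mul : A → A → A
  imp : A → A → A
  inf : A → A → A
  sup : A → A → A
  one : A
  le : A → A → Prop
  le_refl : ∀ x, le x x
  le_antisymm : ∀ x y, le x y → le y x → x = y
  le_trans : ∀ x y z, le x y → le y z → le x z
  inf_le_left : ∀ x y, le (inf x y) x
  inf_le_right : ∀ x y, le (inf x y) y
  le_inf : ∀ x y z, le z x → le z y → le z (inf x y)
  le_sup_left : ∀ x y, le x (sup x y)
  le_sup_right : ∀ x y, le y (sup x y)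
  sup_le : ∀ x y z, le x z → le y z → le (sup x y) z
  mul_comm : ∀ x y, mul x y = mul y x
  mul_assoc : ∀ x y z, mul (mul x y) z = mul x (mul y z)
  mul_one : ∀ x, mul x one = x
  resid : ∀ x y z, le (mul x y) z ↔ le y (imp x z)

/-- An FL_e-algebra: a commutative residuated lattice with an extra constant 0. -/
structure FLe (A : Type u) extends CRL A where
  zero : A

/-- Homomorphism of commutative residuated lattices. -/
def IsCRLHom {A B : Type u} (R : CRL A) (S : CRL B) (h : A → B) : Prop :=
  (∀ x y, h (R.mul x y) = S.mul (h x) (h y)) ∧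
  (∀ x y, h (R.imp x y) = S.imp (h x) (h y)) ∧
  (∀ x y, h (R.inf x y) = S.inf (h x) (h y)) ∧
  (∀ x y, h (R.sup x y) = S.sup (h x) (h y)) ∧
  h R.one = S.one

/-- Homomorphism of FL_e-algebras. -/
def IsFLeHom {A B : Type u} (R : FLe A) (S : FLe B) (h : A → B) : Prop :=
  IsCRLHom R.toCRL S.toCRL h ∧ h R.zero = S.zero

/-- Direct product of commutative residuated lattices. -/
def prodCRL {I : Type u} {A : I → Type u} (R : ∀ i, CRL (A i)) : CRL (∀ i, A i) where
  mul x y := fun i => (R i).mul (x i) (y i)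
  imp x y := fun i => (R i).imp (x i) (y i)
  inf x y := fun i => (R i).inf (x i) (y i)
  sup x y := fun i => (R i).sup (x i) (y i)
  one := fun i => (R i).one
  le x y := ∀ i, (R i).le (x i) (y i)
  le_refl x i := (R i).le_refl (x i)
  le_antisymm x y h1 h2 := funext fun i => (R i).le_antisymm _ _ (h1 i) (h2 i)
  le_trans x y z h1 h2 i := (R i).le_trans _ _ _ (h1 i) (h2 i)
  inf_le_left x y i := (R i).inf_le_left _ _
  inf_le_right x y i := (R i).inf_le_right _ _
  le_inf x y z h1 h2 i := (R i).le_inf _ _ _ (h1 i) (h2 i)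
  le_sup_left x y i := (R i).le_sup_left _ _
  le_sup_right x y i := (R i).le_sup_right _ _
  sup_le x y z h1 h2 i := (R i).sup_le _ _ _ (h1 i) (h2 i)
  mul_comm x y := funext fun i => (R i).mul_comm _ _
  mul_assoc x y z := funext fun i => (R i).mul_assoc _ _ _
  mul_one x := funext fun i => (R i).mul_one _
  resid x y z := forall_congr' fun i => (R i).resid _ _ _

/-- Direct product of FL_e-algebras. -/
def prodFLe {I : Type u} {A : I → Type u} (R : ∀ i, FLe (A i)) : FLe (∀ i, A i) where
  toCRL := prodCRL fun i => (R i).toCRL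
  zero := fun i => (R i).zero

/-- The class of 0-free subreducts of members of a class V of FL_e-algebras:
    commutative residuated lattices embeddable into the 0-free reduct of a member of V. -/
def SubreductClass (V : ∀ A : Type u, FLe A → Prop) : ∀ A : Type u, CRL A → Prop :=
  fun A R => ∃ (B : Type u) (S : FLe B) (h : A → B),
    V B S ∧ Function.Injective h ∧ IsCRLHom R S.toCRL h

namespace CRL
variable {A : Type u} (R : CRL A)

lemma one_mul (x : A) : R.mul R.one x = x := by rw [R.mul_comm]; exact R.mul_one x

lemma mul_le_mul {a b c d : A} (h1 : R.le a b) (h2 : R.le c d) :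
    R.le (R.mul a c) (R.mul b d) := by
  have hbc : R.le (R.mul b c) (R.mul b d) :=
    (R.resid b c (R.mul b d)).2 (R.le_trans _ _ _ h2 ((R.resid b d (R.mul b d)).1 (R.le_refl _)))
  have hac : R.le (R.mul a c) (R.mul b c) := by
    rw [R.mul_comm a c, R.mul_comm b c]
    exact (R.resid c a (R.mul c b)).2
      (R.le_trans _ _ _ h1 ((R.resid c b (R.mul c b)).1 (R.le_refl _)))
  exact R.le_trans _ _ _ hac hbc

lemma mul_sup (c x y : A) :
    R.mul c (R.sup x y) = R.sup (R.mul c x) (R.mul c y) := by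
  apply R.le_antisymm
  · exact (R.resid c (R.sup x y) _).2 (R.sup_le _ _ _
      ((R.resid c x _).1 (R.le_sup_left _ _))
      ((R.resid c y _).1 (R.le_sup_right _ _)))
  · exact R.sup_le _ _ _ (R.mul_le_mul (R.le_refl c) (R.le_sup_left x y))
      (R.mul_le_mul (R.le_refl c) (R.le_sup_right x y))

lemma inf_self (x : A) : R.inf x x = x :=
  R.le_antisymm _ _ (R.inf_le_left x x) (R.le_inf _ _ _ (R.le_refl x) (R.le_refl x))

lemma le_iff_inf {x y : A} : R.le x y ↔ R.inf x y = x := by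
  constructor
  · intro h; exact R.le_antisymm _ _ (R.inf_le_left x y) (R.le_inf _ _ _ (R.le_refl x) h)
  · intro h; rw [← h]; exact R.inf_le_right x y

lemma one_le_imp_self (x : A) : R.le R.one (R.imp x x) :=
  (R.resid x R.one x).1 (by rw [R.mul_one]; exact R.le_refl x)

lemma mul_mul_mul (a b c d : A) :
    R.mul (R.mul a b) (R.mul c d) = R.mul (R.mul a c) (R.mul b d) := by
  rw [R.mul_assoc a b (R.mul c d), ← R.mul_assoc b c d, R.mul_comm b c,
    R.mul_assoc c b d, ← R.mul_assoc a c (R.mul b d)]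

lemma eta_abbrev : True := trivial

end CRL

lemma hom_le {A B : Type u} {R : CRL A} {S : CRL B} {h : A → B}
    (hh : IsCRLHom R S h) {x y : A} (hxy : R.le x y) : S.le (h x) (h y) := by
  have h1 : R.inf x y = x := R.le_iff_inf.1 hxy
  have h2 : S.inf (h x) (h y) = h x := by rw [← hh.2.2.1]; exact congrArg h h1
  exact S.le_iff_inf.2 h2

lemma hom_le_reflect {A B : Type u} {R : CRL A} {S : CRL B} {h : A → B}
    (hh : IsCRLHom R S h) (hinj : Function.Injective h) {x y : A}
    (hxy : S.le (h x) (h y)) : R.le x y := by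
  have h2 : S.inf (h x) (h y) = h x := S.le_iff_inf.1 hxy
  rw [← hh.2.2.1] at h2
  exact R.le_iff_inf.2 (hinj h2)

/-- A set of negative "unit-like" elements used to generate a congruence. -/
structure GoodSet {C : Type u} (T : CRL C) : Type u where
  N : C → Prop
  one_mem : N T.one
  mul_mem : ∀ {n m}, N n → N m → N (T.mul n m)
  mem_le_one : ∀ {n}, N n → T.le n T.one

namespace GoodSet
variable {C : Type u} {T : CRL C} (G : GoodSet T)

def lee (x y : C) : Prop := ∃ n, G.N n ∧ T.le (T.mul n x) y

def sim (x y : C) : Prop := G.lee x y ∧ G.lee y x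

lemma lee_refl (x : C) : G.lee x x :=
  ⟨T.one, G.one_mem, by rw [T.one_mul]; exact T.le_refl x⟩

variable {G}

lemma lee_of_le {x y : C} (h : T.le x y) : G.lee x y :=
  ⟨T.one, G.one_mem, by rw [T.one_mul]; exact h⟩

lemma lee_trans {x y z : C} (h1 : G.lee x y) (h2 : G.lee y z) : G.lee x z := by
  obtain ⟨n, hn, hle1⟩ := h1
  obtain ⟨m, hm, hle2⟩ := h2
  refine ⟨T.mul m n, G.mul_mem hm hn, ?_⟩
  rw [T.mul_assoc]
  exact T.le_trans _ _ _ (T.mul_le_mul (T.le_refl m) hle1) hle2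

lemma lee_trans_le {x y z : C} (h1 : G.lee x y) (h2 : T.le y z) : G.lee x z :=
  lee_trans h1 (lee_of_le h2)

lemma le_trans_lee {x y z : C} (h1 : T.le x y) (h2 : G.lee y z) : G.lee x z :=
  lee_trans (lee_of_le h1) h2

lemma prod_le_left {n m : C} (hn : G.N n) (hm : G.N m) : T.le (T.mul n m) n := by
  have := T.mul_le_mul (T.le_refl n) (G.mem_le_one hm)
  rw [T.mul_one] at this; exact this

lemma prod_le_right {n m : C} (hn : G.N n) (hm : G.N m) : T.le (T.mul n m) m := by
  have := T.mul_le_mul (G.mem_le_one hn) (T.le_refl m)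
  rw [T.one_mul] at this; exact this

lemma lee_mul {x x' y y' : C} (h1 : G.lee x x') (h2 : G.lee y y') :
    G.lee (T.mul x y) (T.mul x' y') := by
  obtain ⟨n, hn, hle1⟩ := h1
  obtain ⟨m, hm, hle2⟩ := h2
  refine ⟨T.mul n m, G.mul_mem hn hm, ?_⟩
  rw [T.mul_mul_mul]
  exact T.mul_le_mul hle1 hle2

lemma lee_inf {x x' y y' : C} (h1 : G.lee x x') (h2 : G.lee y y') :
    G.lee (T.inf x y) (T.inf x' y') := by
  obtain ⟨n, hn, hle1⟩ := h1
  obtain ⟨m, hm, hle2⟩ := h2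
  refine ⟨T.mul n m, G.mul_mem hn hm, T.le_inf _ _ _ ?_ ?_⟩
  · exact T.le_trans _ _ _
      (T.mul_le_mul (prod_le_left hn hm) (T.inf_le_left x y)) hle1
  · exact T.le_trans _ _ _
      (T.mul_le_mul (prod_le_right hn hm) (T.inf_le_right x y)) hle2

lemma lee_le_inf {x y z : C} (h1 : G.lee z x) (h2 : G.lee z y) :
    G.lee z (T.inf x y) := by
  obtain ⟨n, hn, hle1⟩ := h1
  obtain ⟨m, hm, hle2⟩ := h2
  refine ⟨T.mul n m, G.mul_mem hn hm, T.le_inf _ _ _ ?_ ?_⟩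
  · exact T.le_trans _ _ _ (T.mul_le_mul (prod_le_left hn hm) (T.le_refl z)) hle1
  · exact T.le_trans _ _ _ (T.mul_le_mul (prod_le_right hn hm) (T.le_refl z)) hle2

lemma lee_sup_le {x y z : C} (h1 : G.lee x z) (h2 : G.lee y z) :
    G.lee (T.sup x y) z := by
  obtain ⟨n, hn, hle1⟩ := h1
  obtain ⟨m, hm, hle2⟩ := h2
  refine ⟨T.mul n m, G.mul_mem hn hm, ?_⟩
  rw [T.mul_sup]
  refine T.sup_le _ _ _ ?_ ?_
  · exact T.le_trans _ _ _ (T.mul_le_mul (prod_le_left hn hm) (T.le_refl x)) hle1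
  · exact T.le_trans _ _ _ (T.mul_le_mul (prod_le_right hn hm) (T.le_refl y)) hle2

lemma lee_sup {x x' y y' : C} (h1 : G.lee x x') (h2 : G.lee y y') :
    G.lee (T.sup x y) (T.sup x' y') :=
  lee_sup_le (lee_trans_le h1 (T.le_sup_left x' y'))
    (lee_trans_le h2 (T.le_sup_right x' y'))

lemma lee_imp {x x' y y' : C} (h1 : G.lee x' x) (h2 : G.lee y y') :
    G.lee (T.imp x y) (T.imp x' y') := by
  obtain ⟨n, hn, hle1⟩ := h1
  obtain ⟨m, hm, hle2⟩ := h2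
  refine ⟨T.mul n m, G.mul_mem hn hm, ?_⟩
  refine (T.resid x' _ y').1 ?_
  have key : T.mul x' (T.mul (T.mul n m) (T.imp x y)) =
      T.mul m (T.mul (T.mul n x') (T.imp x y)) := by
    rw [← T.mul_assoc x' (T.mul n m) (T.imp x y), ← T.mul_assoc x' n m,
      T.mul_comm x' n, T.mul_assoc n x' m, T.mul_comm x' m, ← T.mul_assoc n m x',
      T.mul_comm n m, T.mul_assoc m n x', T.mul_assoc m (T.mul n x') (T.imp x y)]
  rw [key]
  have hxt : T.le (T.mul x (T.imp x y)) y := (T.resid x (T.imp x y) y).2 (T.le_refl _)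
  have step1 : T.le (T.mul (T.mul n x') (T.imp x y)) y :=
    T.le_trans _ _ _ (T.mul_le_mul hle1 (T.le_refl _)) hxt
  exact T.le_trans _ _ _ (T.mul_le_mul (T.le_refl m) step1) hle2

lemma lee_resid {x y z : C} : G.lee (T.mul x y) z ↔ G.lee y (T.imp x z) := by
  constructor
  · rintro ⟨n, hn, hle⟩
    refine ⟨n, hn, (T.resid x (T.mul n y) z).1 ?_⟩
    rw [← T.mul_assoc, T.mul_comm x n, T.mul_assoc]
    exact hle
  · rintro ⟨n, hn, hle⟩
    refine ⟨n, hn, ?_⟩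
    rw [← T.mul_assoc, T.mul_comm n x, T.mul_assoc]
    exact (T.resid x (T.mul n y) z).2 hle

variable (G)

lemma sim_equiv : Equivalence G.sim where
  refl x := ⟨G.lee_refl x, G.lee_refl x⟩
  symm h := ⟨h.2, h.1⟩
  trans h1 h2 := ⟨lee_trans h1.1 h2.1, lee_trans h2.2 h1.2⟩

def setoid : Setoid C := ⟨G.sim, G.sim_equiv⟩

def Q : Type u := Quotient G.setoid

def qmk (x : C) : G.Q := Quotient.mk G.setoid x

lemma sound {x y : C} (h : G.sim x y) : G.qmk x = G.qmk y := Quotient.sound (s := G.setoid) h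

lemma qexact {x y : C} (h : G.qmk x = G.qmk y) : G.sim x y := Quotient.exact (s := G.setoid) h

def qlee : G.Q → G.Q → Prop :=
  Quotient.lift₂ G.lee (by
    intro a b a' b' ha hb
    apply propext
    constructor
    · intro h; exact lee_trans ha.2 (lee_trans h hb.1)
    · intro h; exact lee_trans ha.1 (lee_trans h hb.2))

def qop (f : C → C → C)
    (hf : ∀ {x x' y y'}, G.sim x x' → G.sim y y' → G.sim (f x y) (f x' y')) :
    G.Q → G.Q → G.Q :=
  Quotient.lift₂ (fun x y => G.qmk (f x y))
    (fun a b a' b' ha hb => G.sound (hf ha hb))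

def qCRL : CRL G.Q where
  mul := G.qop T.mul (fun hx hy => ⟨lee_mul hx.1 hy.1, lee_mul hx.2 hy.2⟩)
  imp := G.qop T.imp (fun hx hy => ⟨lee_imp hx.2 hy.1, lee_imp hx.1 hy.2⟩)
  inf := G.qop T.inf (fun hx hy => ⟨lee_inf hx.1 hy.1, lee_inf hx.2 hy.2⟩)
  sup := G.qop T.sup (fun hx hy => ⟨lee_sup hx.1 hy.1, lee_sup hx.2 hy.2⟩)
  one := G.qmk T.one
  le := G.qlee
  le_refl := fun x => Quotient.inductionOn x (fun a => G.lee_refl a)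
  le_antisymm := fun x y => Quotient.inductionOn₂ x y
    (fun a b h1 h2 => G.sound ⟨h1, h2⟩)
  le_trans := fun x y z => Quotient.inductionOn₃ x y z
    (fun a b c h1 h2 => lee_trans (G := G) h1 h2)
  inf_le_left := fun x y => Quotient.inductionOn₂ x y
    (fun a b => lee_of_le (G := G) (T.inf_le_left a b))
  inf_le_right := fun x y => Quotient.inductionOn₂ x y
    (fun a b => lee_of_le (G := G) (T.inf_le_right a b))
  le_inf := fun x y z => Quotient.inductionOn₃ x y z
    (fun a b c h1 h2 => lee_le_inf (G := G) h1 h2)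
  le_sup_left := fun x y => Quotient.inductionOn₂ x y
    (fun a b => lee_of_le (G := G) (T.le_sup_left a b))
  le_sup_right := fun x y => Quotient.inductionOn₂ x y
    (fun a b => lee_of_le (G := G) (T.le_sup_right a b))
  sup_le := fun x y z => Quotient.inductionOn₃ x y z
    (fun a b c h1 h2 => lee_sup_le (G := G) h1 h2)
  mul_comm := fun x y => Quotient.inductionOn₂ x y
    (fun a b => congrArg G.qmk (T.mul_comm a b))
  mul_assoc := fun x y z => Quotient.inductionOn₃ x y z
    (fun a b c => congrArg G.qmk (T.mul_assoc a b c))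
  mul_one := fun x => Quotient.inductionOn x
    (fun a => congrArg G.qmk (T.mul_one a))
  resid := fun x y z => Quotient.inductionOn₃ x y z
    (fun a b c => lee_resid (G := G))

lemma qmk_hom : IsCRLHom T G.qCRL G.qmk :=
  ⟨fun _ _ => rfl, fun _ _ => rfl, fun _ _ => rfl, fun _ _ => rfl, rfl⟩

lemma qmk_surj : Function.Surjective G.qmk :=
  fun x => Quotient.inductionOn x (fun a => ⟨a, rfl⟩)

end GoodSet

lemma hom_image_aux {A B C : Type u} (R : CRL A) (S : CRL B) (T : FLe C)
    (e : A → C) (he : Function.Injective e) (heh : IsCRLHom R T.toCRL e)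
    (h : A → B) (hs : Function.Surjective h) (hh : IsCRLHom R S h) :
    ∃ (D : Type u) (U : FLe D) (qT : C → D) (g : B → D),
      Function.Surjective qT ∧ IsFLeHom T U qT ∧
      Function.Injective g ∧ IsCRLHom S U.toCRL g := by
  classical
  -- the good set of elements of C generating the extended congruence
  set TC := T.toCRL with hTC
  let G : GoodSet TC :=
    { N := fun n => ∃ a, h a = h R.one ∧ n = e (R.inf a R.one)
      one_mem := by
        refine ⟨R.one, rfl, ?_⟩
        rw [R.inf_self, heh.2.2.2.2]
      mul_mem := by
        rintro n m ⟨a1, ha1, rfl⟩ ⟨a2, ha2, rfl⟩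
        refine ⟨R.mul (R.inf a1 R.one) (R.inf a2 R.one), ?_, ?_⟩
        · rw [hh.1, hh.2.2.1, hh.2.2.1, ha1, ha2, S.inf_self, hh.2.2.2.2, S.mul_one]
        · have hle : R.le (R.mul (R.inf a1 R.one) (R.inf a2 R.one)) R.one := by
            have := R.mul_le_mul (R.inf_le_right a1 R.one) (R.inf_le_right a2 R.one)
            rwa [R.mul_one] at this
          rw [R.le_iff_inf.1 hle, heh.1]
      mem_le_one := by
        rintro n ⟨a, ha, rfl⟩
        have := hom_le heh (R.inf_le_right a R.one)
        rwa [heh.2.2.2.2] at this }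
  -- kernel of h is exactly the restriction of sim to the image of e
  have ker : ∀ a a', h a = h a' → G.sim (e a) (e a') := by
    intro a a' haa
    have key : ∀ b b' : A, h b = h b' →
        G.lee (e b) (e b') := by
      intro b b' hbb
      set t := R.inf (R.inf (R.imp b b') (R.imp b' b)) R.one with ht
      have htle : R.le t R.one := R.inf_le_right _ _
      have hht : h t = h R.one := by
        have h1le : S.le S.one (S.imp (h b') (h b')) := S.one_le_imp_self (h b')
        have : h t = S.inf (S.inf (S.imp (h b) (h b')) (S.imp (h b') (h b))) (h R.one) := by
          rw [ht, hh.2.2.1, hh.2.2.1, hh.2.1, hh.2.1]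
        rw [this, hbb, S.inf_self, hh.2.2.2.2]
        exact S.le_antisymm _ _ (S.inf_le_right _ _)
          (S.le_inf _ _ _ h1le (S.le_refl _))
      refine ⟨e (R.inf t R.one), ⟨t, hht, rfl⟩, ?_⟩
      have hta : R.le (R.mul (R.inf t R.one) b) b' := by
        have h1 : R.le (R.inf t R.one) (R.imp b b') :=
          R.le_trans _ _ _ (R.inf_le_left t R.one)
            (R.le_trans _ _ _ (R.inf_le_left _ _) (R.inf_le_left _ _))
        have h2 : R.le (R.mul b (R.inf t R.one)) b' := (R.resid b _ b').2 h1
        rwa [R.mul_comm] at h2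
      have := hom_le heh hta
      rwa [heh.1] at this
    exact ⟨key a a' haa, key a' a haa.symm⟩
  have sep : ∀ a a', G.sim (e a) (e a') → h a = h a' := by
    intro a a' hsim
    have key : ∀ b b' : A, G.lee (e b) (e b') → S.le (h b) (h b') := by
      rintro b b' ⟨n, ⟨a0, ha0, rfl⟩, hle⟩
      have hle2 : TC.le (e (R.mul (R.inf a0 R.one) b)) (e b') := by rwa [heh.1]
      have hle3 : R.le (R.mul (R.inf a0 R.one) b) b' := hom_le_reflect heh he hle2
      have hle4 := hom_le hh hle3
      rw [hh.1, hh.2.2.1, ha0, S.inf_self, hh.2.2.2.2, S.one_mul] at hle4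
      exact hle4
    exact S.le_antisymm _ _ (key a a' hsim.1) (key a' a hsim.2)
  -- the quotient algebra
  let U : FLe G.Q := { toCRL := G.qCRL, zero := G.qmk T.zero }
  -- the embedding of B
  let u : B → A := fun b => Function.surjInv hs b
  have hu : ∀ b, h (u b) = b := fun b => Function.surjInv_eq hs b
  let g : B → G.Q := fun b => G.qmk (e (u b))
  have gker : ∀ (a : A) (b : B), h a = b → g b = G.qmk (e a) := by
    intro a b hab
    exact G.sound (ker (u b) a (by rw [hu, hab]))
  refine ⟨G.Q, U, G.qmk, g, G.qmk_surj, ⟨G.qmk_hom, rfl⟩, ?_, ?_, ?_, ?_, ?_, ?_⟩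
  · -- injectivity of g
    intro b b' hbb
    have := sep (u b) (u b') (G.qexact hbb)
    rwa [hu, hu] at this
  · -- mul
    intro x y
    rw [gker (R.mul (u x) (u y)) (S.mul x y) (by rw [hh.1, hu, hu])]
    show G.qmk (e (R.mul (u x) (u y))) = G.qCRL.mul (G.qmk (e (u x))) (G.qmk (e (u y)))
    rw [heh.1]; rfl
  · -- imp
    intro x y
    rw [gker (R.imp (u x) (u y)) (S.imp x y) (by rw [hh.2.1, hu, hu])]
    show G.qmk (e (R.imp (u x) (u y))) = G.qCRL.imp (G.qmk (e (u x))) (G.qmk (e (u y)))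
    rw [heh.2.1]; rfl
  · -- inf
    intro x y
    rw [gker (R.inf (u x) (u y)) (S.inf x y) (by rw [hh.2.2.1, hu, hu])]
    show G.qmk (e (R.inf (u x) (u y))) = G.qCRL.inf (G.qmk (e (u x))) (G.qmk (e (u y)))
    rw [heh.2.2.1]; rfl
  · -- sup
    intro x y
    rw [gker (R.sup (u x) (u y)) (S.sup x y) (by rw [hh.2.2.2.1, hu, hu])]
    show G.qmk (e (R.sup (u x) (u y))) = G.qCRL.sup (G.qmk (e (u x))) (G.qmk (e (u y)))
    rw [heh.2.2.2.1]; rfl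
  · -- one
    rw [gker R.one S.one hh.2.2.2.2]
    show G.qmk (e R.one) = G.qCRL.one
    rw [heh.2.2.2.2]
    rfl


/-- If V is a variety of FL_e-algebras (closed under homomorphic images, subalgebras,
    and direct products), then the class of 0-free subreducts of members of V is closed
    under homomorphic images, subalgebras, and direct products, hence is a variety of
    commutative residuated lattices. -/
theorem subreducts_form_variety (V : ∀ A : Type u, FLe A → Prop)
    (Vhom : ∀ (A B : Type u) (R : FLe A) (S : FLe B) (h : A → B),
      V A R → Function.Surjective h → IsFLeHom R S h → V B S)
    (Vsub : ∀ (A B : Type u) (R : FLe A) (S : FLe B) (h : A → B),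
      V B S → Function.Injective h → IsFLeHom R S h → V A R)
    (Vprod : ∀ (I : Type u) (A : I → Type u) (R : ∀ i, FLe (A i)),
      (∀ i, V (A i) (R i)) → V (∀ i, A i) (prodFLe R)) :
    (∀ (A B : Type u) (R : CRL A) (S : CRL B) (h : A → B),
      SubreductClass V A R → Function.Surjective h → IsCRLHom R S h →
        SubreductClass V B S) ∧
    (∀ (A B : Type u) (R : CRL A) (S : CRL B) (h : A → B),
      SubreductClass V B S → Function.Injective h → IsCRLHom R S h →
        SubreductClass V A R) ∧
    (∀ (I : Type u) (A : I → Type u) (R : ∀ i, CRL (A i)),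
      (∀ i, SubreductClass V (A i) (R i)) →
        SubreductClass V (∀ i, A i) (prodCRL R)) := by
  classical
  refine ⟨?_, ?_, ?_⟩
  · -- closure under homomorphic images
    rintro A B R S h ⟨C, T, e, hTV, he, heh⟩ hsurj hhom
    obtain ⟨D, U, qT, g, hqs, hqh, hgi, hgh⟩ :=
      hom_image_aux R S T e he heh h hsurj hhom
    exact ⟨D, U, g, Vhom C D T U qT hTV hqs hqh, hgi, hgh⟩
  · -- closure under subalgebras
    rintro A B R S h ⟨C, T, e, hTV, he, heh⟩ hinj hhom
    refine ⟨C, T, e ∘ h, hTV, he.comp hinj, ?_⟩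
    exact ⟨fun x y => by simp [Function.comp, hhom.1, heh.1],
      fun x y => by simp [Function.comp, hhom.2.1, heh.2.1],
      fun x y => by simp [Function.comp, hhom.2.2.1, heh.2.2.1],
      fun x y => by simp [Function.comp, hhom.2.2.2.1, heh.2.2.2.1],
      by simp [Function.comp, hhom.2.2.2.2, heh.2.2.2.2]⟩
  · -- closure under products
    intro I A R hsub
    choose B T e hV hinj hhom using hsub
    refine ⟨∀ i, B i, prodFLe T, fun x i => e i (x i), Vprod I B T hV, ?_, ?_⟩
    · intro x y hxy
      funext i
      exact hinj i (congrFun hxy i)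
    · refine ⟨fun x y => funext fun i => (hhom i).1 _ _,
        fun x y => funext fun i => (hhom i).2.1 _ _,
        fun x y => funext fun i => (hhom i).2.2.1 _ _,
        fun x y => funext fun i => (hhom i).2.2.2.1 _ _,
        funext fun i => (hhom i).2.2.2.2⟩
end

section
/- Let V be a variety of FL_e-algebras and V₀ the variety of its 0-free subreducts. For any terms a, b in the 0-free signature, the identity a ≈ b holds in V₀ if and only if it holds in V. Consequently, the free V₀-algebra over a set X is isomorphic to the subalgebra of the 0-free reduct of the free V-algebra over X generated by X. -/
set_option linter.unusedVariables false

universe u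

/-- Terms in the 0-free signature {·, →, ∧, ∨, 1}. -/
inductive CRLTerm where
  | var : ℕ → CRLTerm
  | one : CRLTerm
  | mul : CRLTerm → CRLTerm → CRLTerm
  | imp : CRLTerm → CRLTerm → CRLTerm
  | inf : CRLTerm → CRLTerm → CRLTerm
  | sup : CRLTerm → CRLTerm → CRLTerm

/-- Evaluation of a 0-free term in a commutative residuated lattice. -/
def evalT {A : Type u} (R : CRL A) (v : ℕ → A) : CRLTerm → A
  | .var i => v i
  | .one => R.one
  | .mul a b => R.mul (evalT R v a) (evalT R v b)
  | .imp a b => R.imp (evalT R v a) (evalT R v b)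
  | .inf a b => R.inf (evalT R v a) (evalT R v b)
  | .sup a b => R.sup (evalT R v a) (evalT R v b)

/-- An identity a ≈ b holds in a commutative residuated lattice. -/
def SatC {A : Type u} (R : CRL A) (a b : CRLTerm) : Prop :=
  ∀ v : ℕ → A, evalT R v a = evalT R v b

/-- A subuniverse of a commutative residuated lattice. -/
def Subuniv {A : Type u} (R : CRL A) (C : Set A) : Prop :=
  R.one ∈ C ∧
  (∀ a b, a ∈ C → b ∈ C → R.mul a b ∈ C) ∧
  (∀ a b, a ∈ C → b ∈ C → R.imp a b ∈ C) ∧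
  (∀ a b, a ∈ C → b ∈ C → R.inf a b ∈ C) ∧
  (∀ a b, a ∈ C → b ∈ C → R.sup a b ∈ C)

/-- The subuniverse generated by a subset. -/
def genSub {A : Type u} (R : CRL A) (X : Set A) : Set A :=
  ⋂₀ {C : Set A | Subuniv R C ∧ X ⊆ C}

/-- F (with structure RF and insertion ι of generators X) is a free algebra over X
    for a class K of commutative residuated lattices. -/
def IsFreeCRL (K : ∀ A : Type u, CRL A → Prop) (X : Type u)
    (F : Type u) (RF : CRL F) (ι : X → F) : Prop :=
  K F RF ∧ ∀ (B : Type u) (S : CRL B), K B S → ∀ g : X → B,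
    ∃! h : F → B, IsCRLHom RF S h ∧ ∀ x, h (ι x) = g x

/-- F (with structure RF and insertion ι) is a free algebra over X for a class V of
    FL_e-algebras. -/
def IsFreeFLe (V : ∀ A : Type u, FLe A → Prop) (X : Type u)
    (F : Type u) (RF : FLe F) (ι : X → F) : Prop :=
  V F RF ∧ ∀ (B : Type u) (S : FLe B), V B S → ∀ g : X → B,
    ∃! h : F → B, IsFLeHom RF S h ∧ ∀ x, h (ι x) = g x

theorem evalT_hom' {A B : Type u} {R : CRL A} {S : CRL B} {h : A → B}
    (hh : IsCRLHom R S h) (v : ℕ → A) (t : CRLTerm) :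
    h (evalT R v t) = evalT S (fun i => h (v i)) t := by
  obtain ⟨hm, hi, hn, hs, ho⟩ := hh
  induction t with
  | var i => rfl
  | one => exact ho
  | mul a b iha ihb => simp [evalT, hm, iha, ihb]
  | imp a b iha ihb => simp [evalT, hi, iha, ihb]
  | inf a b iha ihb => simp [evalT, hn, iha, ihb]
  | sup a b iha ihb => simp [evalT, hs, iha, ihb]

theorem subset_genSub {A : Type u} (R : CRL A) (X : Set A) : X ⊆ genSub R X :=
  fun a ha => Set.mem_sInter.2 fun _C hC => hC.2 ha

theorem genSub_subset {A : Type u} {R : CRL A} {X C : Set A}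
    (hC : Subuniv R C) (hX : X ⊆ C) : genSub R X ⊆ C :=
  fun a ha => ha C ⟨hC, hX⟩

theorem genSub_subuniv {A : Type u} (R : CRL A) (X : Set A) : Subuniv R (genSub R X) := by
  refine ⟨fun C hC => hC.1.1, fun a b ha hb C hC => hC.1.2.1 a b (ha C hC) (hb C hC),
    fun a b ha hb C hC => hC.1.2.2.1 a b (ha C hC) (hb C hC),
    fun a b ha hb C hC => hC.1.2.2.2.1 a b (ha C hC) (hb C hC),
    fun a b ha hb C hC => hC.1.2.2.2.2 a b (ha C hC) (hb C hC)⟩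

/-- The induced structure on a subuniverse. -/
def subCRL {A : Type u} (R : CRL A) (C : Set A) (hC : Subuniv R C) : CRL C where
  mul a b := ⟨R.mul a b, hC.2.1 _ _ a.2 b.2⟩
  imp a b := ⟨R.imp a b, hC.2.2.1 _ _ a.2 b.2⟩
  inf a b := ⟨R.inf a b, hC.2.2.2.1 _ _ a.2 b.2⟩
  sup a b := ⟨R.sup a b, hC.2.2.2.2 _ _ a.2 b.2⟩
  one := ⟨R.one, hC.1⟩
  le a b := R.le a b
  le_refl a := R.le_refl a
  le_antisymm a b h1 h2 := Subtype.ext (R.le_antisymm _ _ h1 h2)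
  le_trans a b c := R.le_trans _ _ _
  inf_le_left a b := R.inf_le_left _ _
  inf_le_right a b := R.inf_le_right _ _
  le_inf a b c := R.le_inf _ _ _
  le_sup_left a b := R.le_sup_left _ _
  le_sup_right a b := R.le_sup_right _ _
  sup_le a b c := R.sup_le _ _ _
  mul_comm a b := Subtype.ext (R.mul_comm _ _)
  mul_assoc a b c := Subtype.ext (R.mul_assoc _ _ _)
  mul_one a := Subtype.ext (R.mul_one _)
  resid a b c := R.resid _ _ _

theorem subCRL_val_hom {A : Type u} (R : CRL A) (C : Set A) (hC : Subuniv R C) :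
    IsCRLHom (subCRL R C hC) R Subtype.val :=
  ⟨fun _ _ => rfl, fun _ _ => rfl, fun _ _ => rfl, fun _ _ => rfl, rfl⟩

/-- Let V be a variety of FL_e-algebras and V₀ the variety of its 0-free subreducts.
    (1) An identity of 0-free terms holds in V₀ iff it holds in V.
    (2) The free V₀-algebra over X is (isomorphic to) the subalgebra of the 0-free
    reduct of the free V-algebra over X generated by X: the generated subuniverse,
    endowed with the induced structure, is free over X for V₀. -/
theorem subreduct_identities_and_free (V : ∀ A : Type u, FLe A → Prop)
    (Vhom : ∀ (A B : Type u) (R : FLe A) (S : FLe B) (h : A → B),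
      V A R → Function.Surjective h → IsFLeHom R S h → V B S)
    (Vsub : ∀ (A B : Type u) (R : FLe A) (S : FLe B) (h : A → B),
      V B S → Function.Injective h → IsFLeHom R S h → V A R)
    (Vprod : ∀ (I : Type u) (A : I → Type u) (R : ∀ i, FLe (A i)),
      (∀ i, V (A i) (R i)) → V (∀ i, A i) (prodFLe R)) :
    (∀ a b : CRLTerm,
      ((∀ (A : Type u) (R : CRL A), SubreductClass V A R → SatC R a b) ↔
       (∀ (A : Type u) (S : FLe A), V A S → SatC S.toCRL a b))) ∧
    (∀ (X : Type u) (F : Type u) (RF : FLe F) (ι : X → F),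
      IsFreeFLe V X F RF ι →
      ∃ (S₀ : CRL (genSub RF.toCRL (Set.range ι))) (ι₀ : X → genSub RF.toCRL (Set.range ι)),
        (∀ x, (ι₀ x : F) = ι x) ∧
        IsCRLHom S₀ RF.toCRL (Subtype.val) ∧
        IsFreeCRL (SubreductClass V) X (genSub RF.toCRL (Set.range ι)) S₀ ι₀) := by
  constructor
  · -- Part (1)
    intro a b
    constructor
    · intro h A S hS
      exact h A S.toCRL ⟨A, S, id, hS, fun _ _ hxy => hxy,
        ⟨fun _ _ => rfl, fun _ _ => rfl, fun _ _ => rfl, fun _ _ => rfl, rfl⟩⟩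
    · rintro h A R ⟨B, S, e, hVS, einj, ehom⟩ v
      apply einj
      rw [evalT_hom' ehom, evalT_hom' ehom]
      exact h B S hVS (fun i => e (v i))
  · -- Part (2)
    intro X F RF ι hF
    set G := genSub RF.toCRL (Set.range ι) with hGdef
    have hG : Subuniv RF.toCRL G := genSub_subuniv _ _
    refine ⟨subCRL _ _ hG, fun x => ⟨ι x, subset_genSub _ _ ⟨x, rfl⟩⟩, fun x => rfl,
      subCRL_val_hom _ _ _, ?_, ?_⟩
    · exact ⟨F, RF, Subtype.val, hF.1, Subtype.val_injective, subCRL_val_hom _ _ _⟩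
    · rintro B S ⟨C, T, e, hVT, einj, ehom⟩ g
      obtain ⟨H, ⟨⟨Hhom, _⟩, Hι⟩, _⟩ := hF.2 C T hVT (fun x => e (g x))
      -- every element of G is mapped by H into the range of e
      have hrange : ∀ f : F, f ∈ G → H f ∈ Set.range e := by
        refine genSub_subset ⟨?_, ?_, ?_, ?_, ?_⟩ ?_
        · exact ⟨S.one, by rw [ehom.2.2.2.2, Hhom.2.2.2.2]⟩
        · rintro p q ⟨x, hx⟩ ⟨y, hy⟩
          exact ⟨S.mul x y, by rw [ehom.1, Hhom.1, hx, hy]⟩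
        · rintro p q ⟨x, hx⟩ ⟨y, hy⟩
          exact ⟨S.imp x y, by rw [ehom.2.1, Hhom.2.1, hx, hy]⟩
        · rintro p q ⟨x, hx⟩ ⟨y, hy⟩
          exact ⟨S.inf x y, by rw [ehom.2.2.1, Hhom.2.2.1, hx, hy]⟩
        · rintro p q ⟨x, hx⟩ ⟨y, hy⟩
          exact ⟨S.sup x y, by rw [ehom.2.2.2.1, Hhom.2.2.2.1, hx, hy]⟩
        · rintro _ ⟨x, rfl⟩
          exact ⟨g x, (Hι x).symm⟩
      classical
      let h : G → B := fun f => (hrange f.1 f.2).choose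
      have he : ∀ f : G, e (h f) = H f.1 := fun f => (hrange f.1 f.2).choose_spec
      have hhom : IsCRLHom (subCRL RF.toCRL G hG) S h := by
        refine ⟨fun p q => einj ?_, fun p q => einj ?_, fun p q => einj ?_,
          fun p q => einj ?_, einj ?_⟩
        · rw [he, ehom.1, he, he]; exact Hhom.1 _ _
        · rw [he, ehom.2.1, he, he]; exact Hhom.2.1 _ _
        · rw [he, ehom.2.2.1, he, he]; exact Hhom.2.2.1 _ _
        · rw [he, ehom.2.2.2.1, he, he]; exact Hhom.2.2.2.1 _ _
        · rw [he, ehom.2.2.2.2]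
          show H RF.toCRL.one = T.toCRL.one
          exact Hhom.2.2.2.2
      have hι : ∀ x, h ⟨ι x, subset_genSub _ _ ⟨x, rfl⟩⟩ = g x := by
        intro x
        apply einj
        rw [he]
        exact Hι x
      refine ⟨h, ⟨hhom, hι⟩, ?_⟩
      rintro h' ⟨h'hom, h'ι⟩
      -- uniqueness: the agreement set is a subuniverse containing the generators
      have key : ∀ f : F, f ∈ G → ∃ p : f ∈ G, h' ⟨f, p⟩ = h ⟨f, p⟩ := by
        refine genSub_subset ⟨?_, ?_, ?_, ?_, ?_⟩ ?_
        · exact ⟨hG.1, by rw [show (⟨RF.toCRL.one, hG.1⟩ : G) =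
            (subCRL RF.toCRL G hG).one from rfl, h'hom.2.2.2.2, hhom.2.2.2.2]⟩
        · rintro p q ⟨hp, ep⟩ ⟨hq, eq'⟩
          refine ⟨hG.2.1 p q hp hq, ?_⟩
          rw [show (⟨RF.toCRL.mul p q, hG.2.1 p q hp hq⟩ : G) =
            (subCRL RF.toCRL G hG).mul ⟨p, hp⟩ ⟨q, hq⟩ from rfl, h'hom.1, hhom.1, ep, eq']
        · rintro p q ⟨hp, ep⟩ ⟨hq, eq'⟩
          refine ⟨hG.2.2.1 p q hp hq, ?_⟩
          rw [show (⟨RF.toCRL.imp p q, hG.2.2.1 p q hp hq⟩ : G) =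
            (subCRL RF.toCRL G hG).imp ⟨p, hp⟩ ⟨q, hq⟩ from rfl, h'hom.2.1, hhom.2.1, ep, eq']
        · rintro p q ⟨hp, ep⟩ ⟨hq, eq'⟩
          refine ⟨hG.2.2.2.1 p q hp hq, ?_⟩
          rw [show (⟨RF.toCRL.inf p q, hG.2.2.2.1 p q hp hq⟩ : G) =
            (subCRL RF.toCRL G hG).inf ⟨p, hp⟩ ⟨q, hq⟩ from rfl, h'hom.2.2.1, hhom.2.2.1, ep, eq']
        · rintro p q ⟨hp, ep⟩ ⟨hq, eq'⟩
          refine ⟨hG.2.2.2.2 p q hp hq, ?_⟩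
          rw [show (⟨RF.toCRL.sup p q, hG.2.2.2.2 p q hp hq⟩ : G) =
            (subCRL RF.toCRL G hG).sup ⟨p, hp⟩ ⟨q, hq⟩ from rfl, h'hom.2.2.2.1, hhom.2.2.2.1,
            ep, eq']
        · rintro _ ⟨x, rfl⟩
          exact ⟨subset_genSub _ _ ⟨x, rfl⟩, by rw [h'ι x, hι x]⟩
      funext f
      obtain ⟨p, hp⟩ := key f.1 f.2
      exact hp
end

section
/- The only idempotent element of the free n-generated Wajsberg hoop (realized as continuous McNaughton functions f : [0,1]^n → [0,1] with f(1,…,1)=1, with pointwise Łukasiewicz operations) is the function constantly equal to 1. Consequently, no bounded Wajsberg hoop with more than one element embeds into a free finitely generated Wajsberg hoop. -/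
/-- Terms in the language of Wajsberg hoops {·, →, ∧, ∨, 1} over n variables. -/
inductive WT (n : ℕ) where
  | var : Fin n → WT n
  | one : WT n
  | mul : WT n → WT n → WT n
  | imp : WT n → WT n → WT n
  | inf : WT n → WT n → WT n
  | sup : WT n → WT n → WT n

/-- Evaluation of a Wajsberg-hoop term in the standard Wajsberg hoop on [0,1]. -/
noncomputable def evalW {n : ℕ} (v : Fin n → ℝ) : WT n → ℝ
  | .var i => v i
  | .one => 1
  | .mul a b => lmul (evalW v a) (evalW v b)
  | .imp a b => limp (evalW v a) (evalW v b)
  | .inf a b => min (evalW v a) (evalW v b)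
  | .sup a b => max (evalW v a) (evalW v b)

/-- The unit cube [0,1]^n. -/
def Cube (n : ℕ) : Set (Fin n → ℝ) := {x | ∀ i, x i ∈ Set.Icc (0:ℝ) 1}

/-- Membership in the free n-generated Wajsberg hoop, realized as the algebra of
    (continuous, piecewise linear, integer-coefficient) term functions on the cube. -/
def IsWajs (n : ℕ) (f : (Fin n → ℝ) → ℝ) : Prop :=
  ∃ t : WT n, ∀ x ∈ Cube n, f x = evalW x t

/-- A hoop (used here for Wajsberg hoops, adding Tanaka's identity as a hypothesis). -/
structure Hoop (A : Type*) where
  mul : A → A → A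
  imp : A → A → A
  one : A
  mul_comm : ∀ x y, mul x y = mul y x
  mul_assoc : ∀ x y z, mul (mul x y) z = mul x (mul y z)
  mul_one : ∀ x, mul x one = x
  imp_self : ∀ x, imp x x = one
  h2 : ∀ x y, mul x (imp x y) = mul y (imp y x)
  h3 : ∀ x y z, imp (mul x y) z = imp x (imp y z)

/-- The natural order of a hoop. -/
def Hoop.le {A : Type*} (H : Hoop A) (x y : A) : Prop := H.imp x y = H.one

lemma evalW_mem {n : ℕ} {x : Fin n → ℝ} (hx : x ∈ Cube n) (t : WT n) :
    evalW x t ∈ Set.Icc (0:ℝ) 1 := by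
  induction t with
  | var i => exact hx i
  | one => simp [evalW]
  | mul a b ha hb =>
      simp only [evalW, lmul, Set.mem_Icc]
      refine ⟨le_max_left _ _, max_le (by norm_num) (by linarith [ha.2, hb.2])⟩
  | imp a b ha hb =>
      simp only [evalW, limp, Set.mem_Icc]
      refine ⟨le_min (by norm_num) (by linarith [ha.2, hb.1]), min_le_left _ _⟩
  | inf a b ha hb =>
      exact ⟨le_min ha.1 hb.1, min_le_of_left_le ha.2⟩
  | sup a b ha hb =>
      exact ⟨le_max_of_le_left ha.1, max_le ha.2 hb.2⟩

lemma evalW_cont {n : ℕ} (t : WT n) : Continuous fun x : Fin n → ℝ => evalW x t := by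
  induction t with
  | var i => exact continuous_apply i
  | one => exact continuous_const
  | mul a b ha hb =>
      exact continuous_const.max (((ha.add hb)).sub continuous_const)
  | imp a b ha hb =>
      exact continuous_const.min ((continuous_const.sub ha).add hb)
  | inf a b ha hb => exact ha.min hb
  | sup a b ha hb => exact ha.max hb

lemma evalW_ones {n : ℕ} (t : WT n) : evalW (fun _ : Fin n => (1:ℝ)) t = 1 := by
  induction t with
  | var i => rfl
  | one => rfl
  | mul a b ha hb => simp [evalW, lmul, ha, hb]
  | imp a b ha hb => simp [evalW, limp, ha, hb]
  | inf a b ha hb => simp [evalW, ha, hb]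
  | sup a b ha hb => simp [evalW, ha, hb]

lemma ones_mem_cube (n : ℕ) : (fun _ : Fin n => (1:ℝ)) ∈ Cube n := by
  intro i; exact ⟨zero_le_one, le_refl 1⟩

lemma cube_convex (n : ℕ) : Convex ℝ (Cube n) := by
  have : Cube n = Set.pi Set.univ (fun _ : Fin n => Set.Icc (0:ℝ) 1) := by
    ext x
    simp only [Cube, Set.mem_setOf_eq, Set.mem_pi, Set.mem_univ, true_implies]
  rw [this]
  exact convex_pi (fun i _ => convex_Icc 0 1)

lemma idem_part (n : ℕ) : ∀ f : (Fin n → ℝ) → ℝ, IsWajs n f →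
      (∀ x ∈ Cube n, lmul (f x) (f x) = f x) → ∀ x ∈ Cube n, f x = 1 := by
  intro f ⟨t, ht⟩ hid x hx
  set g : (Fin n → ℝ) → ℝ := fun y => evalW y t with hg
  have hvals : ∀ y ∈ Cube n, g y = 0 ∨ g y = 1 := by
    intro y hy
    have h1 := hid y hy
    rw [ht y hy] at h1
    show evalW y t = 0 ∨ evalW y t = 1
    have hm := evalW_mem hy t
    simp only [lmul] at h1
    rcases le_or_gt (2 * evalW y t - 1) 0 with h | h
    · left
      have : max 0 (evalW y t + evalW y t - 1) = 0 := max_eq_left (by linarith)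
      linarith [this ▸ h1]
    · right
      have : max 0 (evalW y t + evalW y t - 1) = evalW y t + evalW y t - 1 :=
        max_eq_right (by linarith)
      rw [this] at h1; linarith
  rw [ht x hx]
  by_contra hne
  have hx0 : g x = 0 := by rcases hvals x hx with h | h; exact h; exact absurd h hne
  have hpc : IsPreconnected (g '' Cube n) :=
    ((cube_convex n).isPreconnected).image g ((evalW_cont t).continuousOn)
  have h0 : (0:ℝ) ∈ g '' Cube n := ⟨x, hx, hx0⟩
  have h1 : (1:ℝ) ∈ g '' Cube n := ⟨_, ones_mem_cube n, evalW_ones t⟩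
  have hoc := hpc.ordConnected
  have hhalf : (1/2 : ℝ) ∈ g '' Cube n := hoc.out h0 h1 (by norm_num)
  obtain ⟨y, hy, hgy⟩ := hhalf
  rcases hvals y hy with h | h <;> rw [hgy] at h <;> norm_num at h

/-- The only idempotent of the free n-generated Wajsberg hoop is the constant 1;
    consequently, no bounded Wajsberg hoop with more than one element embeds into a
    free finitely generated Wajsberg hoop. -/
theorem free_wajsberg_idempotent_and_no_bounded_embedding (n : ℕ) :
    (∀ f : (Fin n → ℝ) → ℝ, IsWajs n f →
      (∀ x ∈ Cube n, lmul (f x) (f x) = f x) → ∀ x ∈ Cube n, f x = 1) ∧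
    (∀ (B : Type) (W : Hoop B),
      (∀ x y, W.imp (W.imp x y) y = W.imp (W.imp y x) x) →
      (∃ bot : B, ∀ b, W.le bot b) →
      (∃ a b : B, a ≠ b) →
      ¬ ∃ e : B → ((Fin n → ℝ) → ℝ),
          (∀ b, IsWajs n (e b)) ∧
          (∀ a b : B, (∀ x ∈ Cube n, e a x = e b x) → a = b) ∧
          (∀ a b : B, ∀ x ∈ Cube n, e (W.mul a b) x = lmul (e a x) (e b x)) ∧
          (∀ a b : B, ∀ x ∈ Cube n, e (W.imp a b) x = limp (e a x) (e b x)) ∧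
          (∀ x ∈ Cube n, e W.one x = 1)) := by
  constructor
  · exact idem_part n
  · rintro B W _ ⟨bot, hbot⟩ ⟨a, b, hab⟩ ⟨e, hw, hinj, hmul, himp, hone⟩
    have hle : ∀ c : B, ∀ x ∈ Cube n, e bot x ≤ e c x := by
      intro c x hx
      have h := hbot c
      unfold Hoop.le at h
      have := himp bot c x hx
      rw [h, hone x hx] at this
      have := this.symm
      simp only [limp] at this
      have h2 : (1:ℝ) ≤ 1 - e bot x + e c x := by
        by_contra hlt
        push_neg at hlt
        rw [min_eq_right hlt.le] at this
        linarith
      linarith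
    have hmem : ∀ c : B, ∀ x ∈ Cube n, e c x ∈ Set.Icc (0:ℝ) 1 := by
      intro c x hx
      obtain ⟨t, ht⟩ := hw c
      rw [ht x hx]; exact evalW_mem hx t
    have hidem : ∀ x ∈ Cube n, lmul (e bot x) (e bot x) = e bot x := by
      intro x hx
      have h1 := hle (W.mul bot bot) x hx
      rw [hmul bot bot x hx] at h1
      have hm := hmem bot x hx
      simp only [lmul] at h1 ⊢
      have : max 0 (e bot x + e bot x - 1) ≤ e bot x :=
        max_le hm.1 (by linarith [hm.2])
      linarith [le_antisymm this h1]
    have hbot1 : ∀ x ∈ Cube n, e bot x = 1 := idem_part n (e bot) (hw bot) hidem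
    have hall : ∀ c : B, ∀ x ∈ Cube n, e c x = 1 := by
      intro c x hx
      exact le_antisymm (hmem c x hx).2 (hbot1 x hx ▸ hle c x hx)
    exact hab (hinj a b (fun x hx => by rw [hall a x hx, hall b x hx]))
end

section
/- Let f : [0,1]² → [0,1] be the term function of [((x → x²) → x) → x] ∨ [((y → y²) → y) → y] in the standard Wajsberg hoop. Then the one-set {(x,y) ∈ [0,1]² : f(x,y) = 1} is exactly the boundary of the unit square, i.e. {(x,y) : x ∈ {0,1} or y ∈ {0,1}}. -/
/-- The term function of ((x → x²) → x) → x in the standard Wajsberg hoop. -/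
noncomputable def g (x : ℝ) : ℝ := limp (limp (limp x (lmul x x)) x) x

lemma g_eq (x : ℝ) (h0 : 0 ≤ x) (h1 : x ≤ 1) : g x = max x (1 - x) := by
  rcases le_total x (1/2) with h | h
  · have e1 : lmul x x = 0 := by unfold lmul; rw [max_eq_left (by linarith)]
    have e2 : limp x 0 = 1 - x := by unfold limp; rw [min_eq_right (by linarith)]; ring
    have e3 : limp (1 - x) x = 2 * x := by
      unfold limp; rw [min_eq_right (by linarith)]; ring
    have e4 : limp (2 * x) x = 1 - x := by
      unfold limp; rw [min_eq_right (by linarith)]; ring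
    rw [g, e1, e2, e3, e4, max_eq_right (by linarith)]
  · have e1 : lmul x x = x + x - 1 := by unfold lmul; rw [max_eq_right (by linarith)]
    have e2 : limp x (x + x - 1) = x := by
      unfold limp; rw [min_eq_right (by linarith)]; ring
    have e3 : limp x x = 1 := by unfold limp; rw [min_eq_left (by linarith)]
    have e4 : limp 1 x = x := by unfold limp; rw [min_eq_right (by linarith)]; ring
    rw [g, e1, e2, e3, e4, max_eq_left (by linarith)]

lemma g_one_iff (x : ℝ) (h0 : 0 ≤ x) (h1 : x ≤ 1) : g x = 1 ↔ x = 0 ∨ x = 1 := by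
  rw [g_eq x h0 h1]
  constructor
  · intro h
    rcases max_cases x (1-x) with ⟨he, _⟩ | ⟨he, _⟩ <;> rw [he] at h
    · right; linarith
    · left; linarith
  · rintro (rfl | rfl) <;> norm_num

/-- The one-set of [((x → x²) → x) → x] ∨ [((y → y²) → y) → y] in [0,1]² is exactly
    the boundary of the unit square. -/
theorem oneset_is_boundary :
    {p : ℝ × ℝ | p.1 ∈ Set.Icc (0:ℝ) 1 ∧ p.2 ∈ Set.Icc (0:ℝ) 1 ∧ max (g p.1) (g p.2) = 1}
      = {p : ℝ × ℝ | (p.1 ∈ Set.Icc (0:ℝ) 1 ∧ p.2 ∈ Set.Icc (0:ℝ) 1) ∧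
          (p.1 = 0 ∨ p.1 = 1 ∨ p.2 = 0 ∨ p.2 = 1)} := by
  ext ⟨x, y⟩
  simp only [Set.mem_setOf_eq, Set.mem_Icc]
  constructor
  · rintro ⟨⟨hx0, hx1⟩, ⟨hy0, hy1⟩, hmax⟩
    refine ⟨⟨⟨hx0, hx1⟩, hy0, hy1⟩, ?_⟩
    rcases max_cases (g x) (g y) with ⟨he, _⟩ | ⟨he, _⟩ <;> rw [he] at hmax
    · rcases (g_one_iff x hx0 hx1).mp hmax with h | h
      · exact Or.inl h
      · exact Or.inr (Or.inl h)
    · rcases (g_one_iff y hy0 hy1).mp hmax with h | h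
      · exact Or.inr (Or.inr (Or.inl h))
      · exact Or.inr (Or.inr (Or.inr h))
  · rintro ⟨⟨⟨hx0, hx1⟩, hy0, hy1⟩, h⟩
    refine ⟨⟨hx0, hx1⟩, ⟨hy0, hy1⟩, ?_⟩
    have hgx1 : g x ≤ 1 := by rw [g_eq x hx0 hx1]; simp; constructor <;> linarith
    have hgy1 : g y ≤ 1 := by rw [g_eq y hy0 hy1]; simp; constructor <;> linarith
    rcases h with h | h | h | h
    · have := (g_one_iff x hx0 hx1).mpr (Or.inl h)
      rw [max_eq_left (this ▸ hgy1), this]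
    · have := (g_one_iff x hx0 hx1).mpr (Or.inr h)
      rw [max_eq_left (this ▸ hgy1), this]
    · have := (g_one_iff y hy0 hy1).mpr (Or.inl h)
      rw [max_eq_right (this ▸ hgx1), this]
    · have := (g_one_iff y hy0 hy1).mpr (Or.inr h)
      rw [max_eq_right (this ▸ hgx1), this]
end
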